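/- Let E be a finite-dimensional real inner product space, let σ ⊆ E be a pointed polyhedral cone, let Δ ⊆ E be a σ-polyhedron, and let v ∈ Δ. Then v is an extreme point of Δ if and only if the normal cone N(Δ, v) has nonempty interior in E. (This identifies the vertices of a σ-polyhedron with the full-dimensional, i.e. maximal, cones of its normal quasifan, the correspondence F ↦ λ(F) used throughout the paper.) -/

import Mathlib

/-!
If `u` lies in the interior of `N(Δ, v)`, then `u` can be tilted against any direction
`w - v` and remain normal, which forces `⟪u, v⟫ < ⟪u, w⟫` for every `w ∈ Δ \ {v}`: `v` is
exposed, hence extreme.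

Conversely, write `Δ = conv F + cone S` with `F`, `S` finite. If `v` is extreme then
`Δ \ {v}` is convex and contains the finite set `G` of the points of `F` and of `v + S`,
except `v`; so `v ∉ conv G`, and Hahn–Banach gives `u` with `⟪u, v⟫ < ⟪u, g⟫` for all
`g ∈ G`. These finitely many strict inequalities are open conditions on `u`, and together
they place `u` in `N(Δ, v)`: they say that `u` is normal to `conv F` at `v` and nonnegative
on `S`.
-/

open Pointwise

/-- The normal cone of a subset `Δ` at a point `v`. -/
def normalCone {E : Type*} [NormedAddCommGroup E] [InnerProductSpace ℝ E]
    (Δ : Set E) (v : E) : Set E :=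
  {u : E | ∀ w ∈ Δ, (inner ℝ u v : ℝ) ≤ inner ℝ u w}

/-- `σ` is a polyhedral cone: the set of nonnegative linear combinations of a
finite subset of `E`. -/
def IsPolyhedralCone {E : Type*} [AddCommGroup E] [Module ℝ E] (σ : Set E) : Prop :=
  ∃ S : Finset E, σ = {x : E | ∃ c : E → ℝ, (∀ s, 0 ≤ c s) ∧ x = ∑ s ∈ S, c s • s}

/-- `Δ` is a `σ`-polyhedron. -/
def IsSigmaPolyhedron {E : Type*} [AddCommGroup E] [Module ℝ E]
    (σ Δ : Set E) : Prop :=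
  ∃ F : Finset E, F.Nonempty ∧ Δ = convexHull ℝ (↑F : Set E) + σ

open Filter Topology PointedCone
open scoped RealInnerProductSpace

theorem IsPolyhedralCone.exists_eq_hull {E : Type*} [AddCommGroup E] [Module ℝ E] {σ : Set E}
    (hσ : IsPolyhedralCone σ) : ∃ S : Finset E, σ = hull ℝ (S : Set E) := by
  obtain ⟨S, rfl⟩ := hσ
  refine ⟨S, Set.ext fun x => ⟨?_, fun hx => ?_⟩⟩
  · rintro ⟨c, hc, rfl⟩
    exact Submodule.sum_mem _ fun s hs => Submodule.smul_mem _ ⟨c s, hc s⟩ (subset_hull hs)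
  · obtain ⟨c, -, rfl⟩ := Submodule.mem_span_finset.1 hx
    exact ⟨fun s => c s, fun s => (c s).2, by simp only [Nonneg.coe_smul]⟩

section NormalCone

variable {E : Type*} [NormedAddCommGroup E] [InnerProductSpace ℝ E]

theorem normalCone_convexHull (s : Set E) (v : E) :
    normalCone (convexHull ℝ s) v = normalCone s v :=
  Set.Subset.antisymm (fun _ hu w hw => hu w (subset_convexHull ℝ s hw))
    fun u hu _ hw => convexHull_min hu (convex_halfSpace_ge (innerₛₗ ℝ u).isLinear _) hw

theorem normalCone_inter_dual_subset_normalCone_add (A B : Set E) (v : E) :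
    normalCone A v ∩ dual (innerₗ E) B ⊆ normalCone (A + B) v := by
  rintro u ⟨hA, hB⟩ _ ⟨a, ha, b, hb, rfl⟩
  have hub : 0 ≤ ⟪u, b⟫ := real_inner_comm b u ▸ hB hb
  rw [inner_add_right]
  linarith [hA a ha]

theorem inner_lt_inner_of_mem_interior_normalCone {Δ : Set E} {u v w : E}
    (hu : u ∈ interior (normalCone Δ v)) (hw : w ∈ Δ) (hwv : w ≠ v) :
    ⟪u, v⟫ < ⟪u, w⟫ := by
  have hnear : ∀ᶠ t in 𝓝 (0 : ℝ), u - t • (w - v) ∈ normalCone Δ v := by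
    refine (Continuous.tendsto (by fun_prop) 0).eventually (mem_interior_iff_mem_nhds.1 ?_)
    simpa using hu
  obtain ⟨t, ht, htpos⟩ :=
    ((hnear.filter_mono nhdsWithin_le_nhds).and self_mem_nhdsWithin).exists (f := 𝓝[>] (0 : ℝ))
  have hnormal : 0 ≤ ⟪u - t • (w - v), w - v⟫ := by
    rw [inner_sub_right]
    linarith [ht w hw]
  have hpos : 0 < t * ‖w - v‖ ^ 2 := by
    have := norm_pos_iff.2 (sub_ne_zero.2 hwv)
    positivity
  rw [inner_sub_left, real_inner_smul_left, real_inner_self_eq_norm_sq, inner_sub_right] at hnormal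
  linarith

theorem mem_exposedPoints_of_mem_interior_normalCone {Δ : Set E} {u v : E} (hv : v ∈ Δ)
    (hu : u ∈ interior (normalCone Δ v)) : v ∈ Δ.exposedPoints ℝ := by
  refine ⟨hv, -innerSL ℝ u, fun w hw => ⟨?_, fun hwu => ?_⟩⟩
  · simpa using interior_subset hu w hw
  · by_contra hwv
    simp only [neg_apply, innerSL_apply_apply, neg_le_neg_iff] at hwu
    exact hwu.not_gt (inner_lt_inner_of_mem_interior_normalCone hu hw hwv)

theorem exists_inner_lt_of_notMem_convexHull [CompleteSpace E] {s : Finset E} {v : E}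
    (hv : v ∉ convexHull ℝ (s : Set E)) : ∃ u : E, ∀ x ∈ s, ⟪u, v⟫ < ⟪u, x⟫ := by
  obtain ⟨f, c, hfv, hfs⟩ := geometric_hahn_banach_point_closed (convex_convexHull ℝ _)
    (s.finite_toSet.isCompact_convexHull (𝕜 := ℝ)).isClosed hv
  refine ⟨(InnerProductSpace.toDual ℝ E).symm f, fun x hx => ?_⟩
  simp only [InnerProductSpace.toDual_symm_apply]
  exact hfv.trans (hfs x (subset_convexHull ℝ _ hx))

theorem mem_normalCone_of_forall_inner_lt [DecidableEq E] {F S : Finset E} {u v : E}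
    (hu : ∀ g ∈ (F ∪ S.image (v + ·)).erase v, ⟪u, v⟫ < ⟪u, g⟫) :
    u ∈ normalCone (convexHull ℝ (F : Set E) + (hull ℝ (S : Set E) : Set E)) v := by
  refine normalCone_inter_dual_subset_normalCone_add _ _ _ ⟨?_, ?_⟩
  · rw [normalCone_convexHull]
    intro f hf
    rcases eq_or_ne f v with rfl | hfv
    · exact le_rfl
    · exact (hu f (Finset.mem_erase.2 ⟨hfv, Finset.mem_union_left _ hf⟩)).le
  · rw [dual_hull]
    intro s hs
    rcases eq_or_ne s 0 with rfl | hs0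
    · simp
    · have hvs := hu (v + s) (Finset.mem_erase.2
        ⟨by simpa using hs0, Finset.mem_union_right _ (Finset.mem_image_of_mem _ hs)⟩)
      rw [inner_add_right] at hvs
      rw [innerₗ_apply_apply, real_inner_comm]
      linarith

theorem interior_normalCone_nonempty_of_mem_extremePoints [CompleteSpace E]
    {F S : Finset E} {v : E}
    (hv : v ∈ (convexHull ℝ (F : Set E) + (hull ℝ (S : Set E) : Set E)).extremePoints ℝ) :
    (interior
      (normalCone (convexHull ℝ (F : Set E) + (hull ℝ (S : Set E) : Set E)) v)).Nonempty := by
  classical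
  set Δ := convexHull ℝ (F : Set E) + (hull ℝ (S : Set E) : Set E)
  have hΔ : Convex ℝ Δ := (convex_convexHull ℝ _).add (hull ℝ (S : Set E)).convex
  obtain ⟨hvΔ, hconvex⟩ := hΔ.mem_extremePoints_iff_convex_sdiff.1 hv
  set G := (F ∪ S.image (v + ·)).erase v
  have hG : (G : Set E) ⊆ Δ \ {v} := by
    rw [Finset.coe_erase, Finset.coe_union, Finset.coe_image]
    refine Set.sdiff_subset_sdiff_left (Set.union_subset ?_ ?_)
    · exact fun f hf => ⟨f, subset_convexHull ℝ _ hf, 0, zero_mem _, add_zero f⟩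
    · rintro _ ⟨s, hs, rfl⟩
      obtain ⟨p, hp, c, hc, rfl⟩ := hvΔ
      exact ⟨p, hp, c + s, add_mem hc (subset_hull hs), (add_assoc p c s).symm⟩
  obtain ⟨u, hu⟩ := exists_inner_lt_of_notMem_convexHull (s := G)
    fun h => (convexHull_min hG hconvex h).2 rfl
  have hopen : IsOpen (⋂ g ∈ G, {u' : E | ⟪u', v⟫ < ⟪u', g⟫}) :=
    isOpen_biInter_finset fun g _ => isOpen_lt (by fun_prop) (by fun_prop)
  refine ⟨u, interior_maximal (fun u' hu' => ?_) hopen (Set.mem_iInter₂.2 hu)⟩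
  exact mem_normalCone_of_forall_inner_lt fun g hg => Set.mem_iInter₂.1 hu' g hg

end NormalCone

theorem extremePoint_iff_normalCone_interior_nonempty_general
    {E : Type*} [NormedAddCommGroup E] [InnerProductSpace ℝ E]
    [FiniteDimensional ℝ E]
    (σ : Set E) (hσ : IsPolyhedralCone σ)
    (Δ : Set E) (hΔ : IsSigmaPolyhedron σ Δ) (v : E) (hv : v ∈ Δ) :
    v ∈ Δ.extremePoints ℝ ↔ (interior (normalCone Δ v)).Nonempty := by
  obtain ⟨S, rfl⟩ := hσ.exists_eq_hull
  obtain ⟨F, -, rfl⟩ := hΔ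
  exact ⟨interior_normalCone_nonempty_of_mem_extremePoints, fun ⟨_, hu⟩ =>
    exposedPoints_subset_extremePoints (mem_exposedPoints_of_mem_interior_normalCone hv hu)⟩

/-- A point of a `σ`-polyhedron (with `σ` pointed) is a vertex if and only if
its normal cone is full-dimensional, i.e. has nonempty interior. -/
theorem extremePoint_iff_normalCone_interior_nonempty
    {E : Type*} [NormedAddCommGroup E] [InnerProductSpace ℝ E]
    [FiniteDimensional ℝ E]
    (σ : Set E) (hσ : IsPolyhedralCone σ) (hpointed : σ ∩ (-σ) = {0})
    (Δ : Set E) (hΔ : IsSigmaPolyhedron σ Δ) (v : E) (hv : v ∈ Δ) :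
    v ∈ Δ.extremePoints ℝ ↔ (interior (normalCone Δ v)).Nonempty :=
  extremePoint_iff_normalCone_interior_nonempty_general σ hσ Δ hΔ v hv
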